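/- Let α, β ∈ ℂ and let T be the 2×2 complex matrix with rows (α, β) and (0, α), acting on ℓ_p². Then the numerical range V_p(T) is the closed disc centered at α of radius |β|·(1/p)^{1/p}·(1/q)^{1/q}, i.e. V_p(T) = { z ∈ ℂ : |z − α| ≤ |β|·(1/p)^{1/p}·(1/q)^{1/q} }. -/

import Mathlib

open Complex Real

/-- The `ℓ_p` norm on `ℂ²`. -/
noncomputable def lpNorm (p : ℝ) (x : Fin 2 → ℂ) : ℝ :=
  (∑ k, ‖x k‖ ^ p) ^ (1 / p)

/-- The numerical range of a `2 × 2` complex matrix acting on `ℓ_p²`.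
Note that when `x k = 0` the corresponding term vanishes since `conj (x k) = 0`. -/
noncomputable def numRange (p : ℝ) (T : Matrix (Fin 2) (Fin 2) ℂ) : Set ℂ :=
  { z | ∃ x : Fin 2 → ℂ, lpNorm p x = 1 ∧
      z = ∑ k, T.mulVec x k * (starRingEnd ℂ) (x k) * ((‖x k‖ ^ (p - 2) : ℝ) : ℂ) }

/-- The numerical radius of a `2 × 2` complex matrix acting on `ℓ_p²`. -/
noncomputable def numRadius (p : ℝ) (T : Matrix (Fin 2) (Fin 2) ℂ) : ℝ :=
  sSup ((fun z : ℂ => ‖z‖) '' numRange p T)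

/-!
On the unit sphere of `ℓ_p²` the form of `!![α, β; 0, α]` equals
`α + β * x₁ * conj x₀ * |x₀| ^ (p - 2)`, so `V_p(T) = α + β • V_p(N)` for the nilpotent
`N = !![0, 1; 0, 0]`. The modulus of `x₁ * conj x₀ * |x₀| ^ (p - 2)` is `s ^ (p - 1) * t` with
`s ^ p + t ^ p = 1`; writing `u = s ^ p` this is `u ^ (1/q) * (1 - u) ^ (1/p)`, which by weighted
AM–GM is at most `(1/q) ^ (1/q) * (1/p) ^ (1/p)`, attained at `u = 1/q`. By continuity every smaller
modulus occurs, and rotating `x₁` gives every argument, so `V_p(N)` is the closed disc of that radius.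
-/

open ComplexConjugate Metric Set

namespace Real

theorem rpow_mul_one_sub_rpow_le {a b u : ℝ} (ha : 0 < a) (hb : 0 < b) (hab : a + b = 1)
    (hu₀ : 0 ≤ u) (hu₁ : u ≤ 1) : u ^ a * (1 - u) ^ b ≤ a ^ a * b ^ b := by
  have hv₀ : 0 ≤ 1 - u := sub_nonneg.2 hu₁
  have amgm := geom_mean_le_arith_mean2_weighted ha.le hb.le (div_nonneg hu₀ ha.le)
    (div_nonneg hv₀ hb.le) hab
  rw [div_rpow hu₀ ha.le, div_rpow hv₀ hb.le, mul_div_cancel₀ _ ha.ne', mul_div_cancel₀ _ hb.ne',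
    add_sub_cancel, div_mul_div_comm, div_le_one (by positivity)] at amgm
  exact amgm

theorem exists_rpow_mul_one_sub_rpow_eq {a b c : ℝ} (ha : 0 < a) (hb : 0 < b) (hab : a + b = 1)
    (hc₀ : 0 ≤ c) (hc : c ≤ a ^ a * b ^ b) : ∃ u ∈ Icc (0 : ℝ) 1, u ^ a * (1 - u) ^ b = c := by
  have hcont : ContinuousOn (fun u : ℝ ↦ u ^ a * (1 - u) ^ b) (Icc 0 a) :=
    ((continuous_id.rpow_const fun _ ↦ Or.inr ha.le).mul
      ((continuous_const.sub continuous_id).rpow_const fun _ ↦ Or.inr hb.le)).continuousOn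
  have hb' : 1 - a = b := by linarith
  obtain ⟨u, hu, rfl⟩ := intermediate_value_Icc ha.le hcont
    ⟨by simpa [zero_rpow ha.ne'] using hc₀, by simpa [hb'] using hc⟩
  exact ⟨u, ⟨hu.1, hu.2.trans (by linarith)⟩, rfl⟩

theorem mul_rpow_sub_two {s p : ℝ} (hs : 0 ≤ s) (hp : p ≠ 1) : s * s ^ (p - 2) = s ^ (p - 1) := by
  rw [← rpow_one_add' hs (by contrapose! hp; linarith)]
  ring_nf

namespace HolderConjugate

variable {p q : ℝ} (h : p.HolderConjugate q)
include h

theorem rpow_sub_one_eq {s : ℝ} (hs : 0 ≤ s) : s ^ (p - 1) = (s ^ p) ^ q⁻¹ := by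
  rw [← rpow_mul hs, ← div_eq_mul_inv, h.div_conj_eq_sub_one]

theorem rpow_sub_one_mul_le {s t : ℝ} (hs : 0 ≤ s) (ht : 0 ≤ t) (hst : s ^ p + t ^ p = 1) :
    s ^ (p - 1) * t ≤ (1 / p) ^ (1 / p) * (1 / q) ^ (1 / q) := by
  have ht' : t = (1 - s ^ p) ^ p⁻¹ := by rw [← hst, add_sub_cancel_left, rpow_rpow_inv ht h.ne_zero]
  rw [h.rpow_sub_one_eq hs, ht', mul_comm ((1 / p) ^ _), one_div, one_div]
  exact rpow_mul_one_sub_rpow_le h.symm.inv_pos h.inv_pos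
    (by rw [add_comm, h.inv_add_inv_eq_one]) (rpow_nonneg hs p) (by rw [← hst]; simp [rpow_nonneg ht])

theorem exists_rpow_sub_one_mul_eq {c : ℝ} (hc₀ : 0 ≤ c)
    (hc : c ≤ (1 / p) ^ (1 / p) * (1 / q) ^ (1 / q)) :
    ∃ s t : ℝ, 0 ≤ s ∧ 0 ≤ t ∧ s ^ p + t ^ p = 1 ∧ s ^ (p - 1) * t = c := by
  rw [mul_comm, one_div, one_div] at hc
  obtain ⟨u, ⟨hu₀, hu₁⟩, rfl⟩ := exists_rpow_mul_one_sub_rpow_eq h.symm.inv_pos h.inv_pos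
    (by rw [add_comm, h.inv_add_inv_eq_one]) hc₀ hc
  refine ⟨u ^ p⁻¹, (1 - u) ^ p⁻¹, by positivity, rpow_nonneg (sub_nonneg.2 hu₁) _, ?_, ?_⟩
  · rw [rpow_inv_rpow hu₀ h.ne_zero, rpow_inv_rpow (sub_nonneg.2 hu₁) h.ne_zero, add_sub_cancel]
  · rw [h.rpow_sub_one_eq (by positivity), rpow_inv_rpow hu₀ h.ne_zero]

end HolderConjugate

end Real

namespace Complex

theorem mul_conj_mul_norm_rpow_sub_two {p : ℝ} (hp : p ≠ 0) (x : ℂ) :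
    x * conj x * ((‖x‖ ^ (p - 2) : ℝ) : ℂ) = ((‖x‖ ^ p : ℝ) : ℂ) := by
  rw [mul_conj, normSq_eq_norm_sq, ← ofReal_mul, ← rpow_natCast,
    ← rpow_add' (norm_nonneg x) (by simpa)]
  norm_num

theorem norm_mul_conj_mul_norm_rpow_sub_two {p : ℝ} (hp : p ≠ 1) (x y : ℂ) :
    ‖y * conj x * ((‖x‖ ^ (p - 2) : ℝ) : ℂ)‖ = ‖x‖ ^ (p - 1) * ‖y‖ := by
  rw [norm_mul, norm_mul, norm_conj, norm_real, norm_of_nonneg (by positivity), mul_assoc,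
    mul_rpow_sub_two (norm_nonneg x) hp, mul_comm]

theorem image_add_mul_closedBall_zero (α β : ℂ) {r : ℝ} (hr : 0 ≤ r) :
    (fun w ↦ α + β * w) '' closedBall 0 r = closedBall α (‖β‖ * r) := by
  have h := vadd_closedBall α (β • (0 : ℂ)) (‖β‖ * r)
  rw [← smul_closedBall β 0 hr] at h
  simpa [image_image, ← image_smul, ← image_vadd] using h

end Complex

theorem lpNorm_eq_one_iff {p : ℝ} (hp : p ≠ 0) (x : Fin 2 → ℂ) :
    lpNorm p x = 1 ↔ ‖x 0‖ ^ p + ‖x 1‖ ^ p = 1 := by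
  rw [lpNorm, Fin.sum_univ_two, one_div, rpow_inv_eq (by positivity) zero_le_one hp, one_rpow]

theorem sum_upperTriangular_mulVec_mul_conj {p : ℝ} (hp : p ≠ 0) (α β : ℂ) (x : Fin 2 → ℂ) :
    ∑ k, (!![α, β; 0, α]).mulVec x k * conj (x k) * ((‖x k‖ ^ (p - 2) : ℝ) : ℂ) =
      α * ((‖x 0‖ ^ p + ‖x 1‖ ^ p : ℝ) : ℂ) +
        β * (x 1 * conj (x 0) * ((‖x 0‖ ^ (p - 2) : ℝ) : ℂ)) := by
  simp only [Matrix.mulVec, dotProduct, Matrix.of_apply, Matrix.cons_val', Matrix.cons_val_fin_one,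
    Fin.sum_univ_two, Matrix.cons_val_zero, Matrix.cons_val_one, zero_mul, zero_add, ofReal_add]
  linear_combination α * mul_conj_mul_norm_rpow_sub_two hp (x 0) +
    α * mul_conj_mul_norm_rpow_sub_two hp (x 1)

theorem numRange_upperTriangular_eq_image {p : ℝ} (hp : p ≠ 0) (α β : ℂ) :
    numRange p !![α, β; 0, α] = (fun w ↦ α + β * w) '' numRange p !![0, 1; 0, 0] := by
  ext z
  simp only [numRange, mem_ofPred_eq, mem_image, sum_upperTriangular_mulVec_mul_conj hp,
    lpNorm_eq_one_iff hp]
  constructor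
  · rintro ⟨x, hx, rfl⟩
    exact ⟨_, ⟨x, hx, rfl⟩, by rw [hx]; simp⟩
  · rintro ⟨_, ⟨x, hx, rfl⟩, rfl⟩
    exact ⟨x, hx, by rw [hx]; simp⟩

theorem numRange_nilpotent_eq_closedBall {p q : ℝ} (h : p.HolderConjugate q) :
    numRange p !![0, 1; 0, 0] = closedBall 0 ((1 / p) ^ (1 / p) * (1 / q) ^ (1 / q)) := by
  ext w
  simp only [numRange, mem_ofPred_eq, sum_upperTriangular_mulVec_mul_conj h.ne_zero,
    lpNorm_eq_one_iff h.ne_zero, mem_closedBall_zero_iff, zero_mul, one_mul, zero_add]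
  constructor
  · rintro ⟨x, hx, rfl⟩
    rw [norm_mul_conj_mul_norm_rpow_sub_two h.lt.ne']
    exact h.rpow_sub_one_mul_le (norm_nonneg _) (norm_nonneg _) hx
  · intro hw
    obtain ⟨s, t, hs, ht, hst, hc⟩ := h.exists_rpow_sub_one_mul_eq (norm_nonneg w) hw
    refine ⟨![s, t * exp (arg w * I)], ?_, ?_⟩
    · simpa [norm_exp_ofReal_mul_I, abs_of_nonneg hs, abs_of_nonneg ht] using hst
    · simp only [Matrix.cons_val_one, Matrix.cons_val_fin_one, Matrix.cons_val_zero, conj_ofReal,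
        norm_real, norm_eq_abs]
      rw [abs_of_nonneg hs]
      calc w = ((s ^ (p - 1) * t : ℝ) : ℂ) * exp (arg w * I) := by
            rw [hc, norm_mul_exp_arg_mul_I]
        _ = _ := by
            rw [← mul_rpow_sub_two hs h.lt.ne']
            push_cast
            ring

theorem upper_triangular_equal_diag_numRange_is_disc (p q : ℝ) (hp : 1 < p)
    (hq : q = p / (p - 1)) (α β : ℂ) :
    numRange p !![α, β; 0, α] =
      { z : ℂ | ‖z - α‖ ≤ ‖β‖ * ((1 / p) ^ (1 / p) * (1 / q) ^ (1 / q)) } := by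
  have h : p.HolderConjugate q := hq ▸ .conjExponent hp
  have hr : 0 ≤ (1 / p) ^ (1 / p) * (1 / q) ^ (1 / q) := by
    have := h.pos; have := h.symm.pos; positivity
  rw [numRange_upperTriangular_eq_image h.ne_zero, numRange_nilpotent_eq_closedBall h,
    image_add_mul_closedBall_zero α β hr]
  ext z
  simp [dist_eq_norm]
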